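/- Let K be a field, d_1,…,d_n natural numbers, and for each i let f_i = Σ_{|a| ≤ d_i} c_{ia} x^a ∈ K[x_1,…,x_n]. For t ∈ K define f_{t,i} := Σ_{|a| ≤ d_i} c_{ia} t^{d_i − |a|} x^a, and let J_f = det(∂f_i/∂x_j) and J_{f_t} = det(∂f_{t,i}/∂x_j) be the Jacobian determinants. Then for every x ∈ K^n and every t ∈ K, J_{f_t}(t·x) = t^ρ·J_f(x), where ρ = Σ_{i=1}^n d_i − n (assuming Σ d_i ≥ n). -/

import Mathlib

/-!
Scaling `x` by `t` multiplies the monomial `x^a` by `t^|a|`, so `f_t(t x) = t^d f(x)` whenever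
`deg f ≤ d`. Scaling commutes with differentiation, `∂_j (f_t) = (∂_j f)_t` at level `d - 1`, so
row `i` of the Jacobian matrix of `f_t` at `t x` is `t^(d_i - 1)` times row `i` of that of `f`
at `x`. If some `d_i = 0` then `f_i` is constant and both determinants vanish; otherwise
`Σ (d_i - 1) = Σ d_i - n`.
-/

open MvPolynomial

/-- The `t`-scaled polynomial of level `d` of `f = Σ_a c_a x^a`, namely
`f_t := Σ_a c_a t^{d − |a|} x^a`, where `|a|` is the sum of the entries of `a`. -/
noncomputable def scaledPoly {K : Type*} [CommRing K] {n : ℕ}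
    (f : MvPolynomial (Fin n) K) (d : ℕ) (t : K) : MvPolynomial (Fin n) K :=
  ∑ a ∈ f.support, monomial a (f.coeff a * t ^ (d - a.degree))

namespace MvPolynomial

variable {σ R : Type*} [CommRing R]

theorem totalDegree_pderiv_le (f : MvPolynomial σ R) (j : σ) :
    (pderiv j f).totalDegree ≤ f.totalDegree - 1 := by
  refine Finset.sup_le fun m hm => ?_
  have hmem : m + Finsupp.single j 1 ∈ f.support := by
    rw [mem_support_iff, coeff_pderiv] at hm
    exact mem_support_iff.mpr (left_ne_zero_of_mul hm)
  have hle : (m + Finsupp.single j 1).degree ≤ f.totalDegree := le_totalDegree hmem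
  rw [map_add, Finsupp.degree_single] at hle
  change m.degree ≤ _
  omega

theorem eval_smul_monomial (t : R) (x : σ → R) (s : σ →₀ ℕ) (c : R) :
    eval (t • x) (monomial s c) = t ^ s.degree * eval x (monomial s c) := by
  simp only [eval_monomial, Finsupp.prod, Pi.smul_apply, smul_eq_mul, mul_pow,
    Finset.prod_mul_distrib, Finset.prod_pow_eq_pow_sum, Finsupp.degree_apply]
  ring

end MvPolynomial

section ScaledPoly

variable {K : Type*} [CommRing K] {n : ℕ}

theorem coeff_scaledPoly (f : MvPolynomial (Fin n) K) (d : ℕ) (t : K) (a : Fin n →₀ ℕ) :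
    coeff a (scaledPoly f d t) = coeff a f * t ^ (d - a.degree) := by
  classical
  rw [scaledPoly, coeff_sum]
  simp only [coeff_monomial]
  rw [Finset.sum_ite_eq']
  split_ifs with ha
  · rfl
  · rw [notMem_support_iff.mp ha, zero_mul]

theorem pderiv_scaledPoly (f : MvPolynomial (Fin n) K) (d : ℕ) (t : K) (j : Fin n) :
    pderiv j (scaledPoly f d t) = scaledPoly (pderiv j f) (d - 1) t := by
  ext m
  rw [coeff_pderiv, coeff_scaledPoly, coeff_scaledPoly, coeff_pderiv, map_add,
    Finsupp.degree_single, Nat.sub_sub, add_comm 1]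
  ring

theorem eval_smul_scaledPoly {f : MvPolynomial (Fin n) K} {d : ℕ} (hf : f.totalDegree ≤ d)
    (t : K) (x : Fin n → K) :
    eval (t • x) (scaledPoly f d t) = t ^ d * eval x f := by
  conv_rhs => rw [f.as_sum]
  rw [scaledPoly, map_sum, map_sum, Finset.mul_sum]
  refine Finset.sum_congr rfl fun a ha => ?_
  have had : a.degree ≤ d := (le_totalDegree ha).trans hf
  rw [eval_smul_monomial, eval_monomial, eval_monomial, ← Nat.sub_add_cancel had, pow_add,
    Nat.add_sub_cancel]
  ring

end ScaledPoly

-- `d i - 1` truncates at `d i = 0`; the vanishing of those rows is what makes the exponents add up.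
theorem Matrix.det_of_pow_sub_one_mul {ι R : Type*} [Fintype ι] [DecidableEq ι] [CommRing R]
    (M : Matrix ι ι R) (d : ι → ℕ) (t : R) (hM : ∀ i, d i = 0 → ∀ j, M i j = 0) :
    (Matrix.of fun i j => t ^ (d i - 1) * M i j).det =
      t ^ (∑ i, d i - Fintype.card ι) * M.det := by
  rw [Matrix.det_mul_column]
  by_cases hpos : ∀ i, d i ≠ 0
  · have hsum : ∑ i, (d i - 1) = ∑ i, d i - Fintype.card ι := by
      rw [Finset.sum_tsub_distrib _ fun i _ => Nat.one_le_iff_ne_zero.mpr (hpos i)]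
      simp
    rw [Finset.prod_pow_eq_pow_sum, hsum]
  · push Not at hpos
    obtain ⟨i, hi⟩ := hpos
    rw [Matrix.det_eq_zero_of_row_eq_zero i (hM i hi), mul_zero, mul_zero]

theorem jacobian_scaledPoly_eval_smul_general {K : Type*} [Field K] {n : ℕ}
    (f : Fin n → MvPolynomial (Fin n) K) (d : Fin n → ℕ)
    (hd : ∀ i, (f i).totalDegree ≤ d i) :
    ∀ (x : Fin n → K) (t : K),
      eval (t • x) (Matrix.of fun i j => pderiv j (scaledPoly (f i) (d i) t)).det =
        t ^ ((∑ i, d i) - n) * eval x (Matrix.of fun i j => pderiv j (f i)).det := by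
  intro x t
  have hentry : ∀ i j, eval (t • x) (pderiv j (scaledPoly (f i) (d i) t)) =
      t ^ (d i - 1) * eval x (pderiv j (f i)) := fun i j => by
    rw [pderiv_scaledPoly, eval_smul_scaledPoly
      ((totalDegree_pderiv_le _ _).trans (Nat.sub_le_sub_right (hd i) 1))]
  have hconst : ∀ i, d i = 0 → ∀ j, eval x (pderiv j (f i)) = 0 := fun i hi j => by
    rw [(totalDegree_eq_zero_iff_eq_C (p := f i)).mp (Nat.le_zero.mp (hi ▸ hd i)), pderiv_C,
      map_zero]
  have hscale := Matrix.det_of_pow_sub_one_mul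
    ((eval x).mapMatrix (Matrix.of fun i j => pderiv j (f i))) d t hconst
  rw [Fintype.card_fin] at hscale
  rw [RingHom.map_det, RingHom.map_det, ← hscale]
  congr 1
  ext i j
  exact hentry i j

/-- If each `f_i` has total degree at most `d_i` and `Σ d_i ≥ n`, then the Jacobian
determinants of the system `f` and of the scaled system `f_t` satisfy
`J_{f_t}(t·x) = t^ρ·J_f(x)` for all `x ∈ K^n` and `t ∈ K`, where `ρ = Σ d_i − n`. -/
theorem jacobian_scaledPoly_eval_smul {K : Type*} [Field K] {n : ℕ}
    (f : Fin n → MvPolynomial (Fin n) K) (d : Fin n → ℕ)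
    (hd : ∀ i, (f i).totalDegree ≤ d i) (hn : n ≤ ∑ i, d i) :
    ∀ (x : Fin n → K) (t : K),
      eval (t • x) (Matrix.of fun i j => pderiv j (scaledPoly (f i) (d i) t)).det =
        t ^ ((∑ i, d i) - n) * eval x (Matrix.of fun i j => pderiv j (f i)).det :=
  jacobian_scaledPoly_eval_smul_general f d hd
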